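/- Let α > 0 and let T := γ₂ Tr(M S₀^α) where S₀^α = ((α+2)/α) S₀ and c_α = (2/(α+2))^(2/α). If c_α γ₂ Tr(M S₀) > α/(α+2), then 1 - T^{-α/2} ≤ min{c_α γ₂ Tr(M S₀), 1}. In particular the second branch of the generalized Gauss bound is no larger than both 1 and the first-branch expression. -/
import Mathlib


open Matrix

/-- Second branch of the generalized Gauss bound: if c_α·γ₂·Tr(M S₀) > α/(α+2), then
1 − (γ₂ Tr(M S₀^α))^{−α/2} ≤ min{c_α γ₂ Tr(M S₀), 1}, where S₀^α = ((α+2)/α) S₀. -/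
theorem gauss_second_branch_le
    {n : ℕ} (M S₀ : Matrix (Fin n) (Fin n) ℝ)
    (hM : M.PosSemidef) (hS₀ : S₀.PosSemidef)
    (α γ₂ : ℝ) (hα : 0 < α) (hγ₂ : 0 < γ₂)
    (c : ℝ) (hc : c = ((2 : ℝ) / (α + 2)) ^ ((2 : ℝ) / α))
    (T : ℝ) (hT : T = γ₂ * (M * (((α + 2) / α) • S₀)).trace)
    (hbranch : α / (α + 2) < c * (γ₂ * (M * S₀).trace)) :
    1 - T ^ (-(α / 2)) ≤ min (c * (γ₂ * (M * S₀).trace)) 1 := by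
  have hα2 : (0:ℝ) < α + 2 := by linarith
  have ha : (0:ℝ) < 2 / (α + 2) := by positivity
  have hc0 : 0 < c := by rw [hc]; positivity
  set x := γ₂ * (M * S₀).trace with hx
  have hTx : T = ((α + 2) / α) * x := by
    rw [hT, hx, Matrix.mul_smul, Matrix.trace_smul, smul_eq_mul]; ring
  have hcx : 0 < c * x := lt_trans (div_pos hα hα2) hbranch
  have hx0 : 0 < x := by nlinarith
  have hT0 : 0 < T := by rw [hTx]; positivity
  set v := ((α + 2) / α) * (c * x) with hvdef
  have hv0 : 0 < v := by positivity
  have hαv : α * v = (α + 2) * (c * x) := by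
    rw [hvdef]; field_simp
  have hv1 : 1 < v := by
    rw [div_lt_iff₀ hα2] at hbranch
    nlinarith
  have hTv : T = v / c := by
    rw [hTx, hvdef]; field_simp
  -- c ^ (α/2) = 2/(α+2)
  have hca : c ^ (α / 2) = 2 / (α + 2) := by
    rw [hc, ← Real.rpow_mul ha.le,
      show (2 : ℝ) / α * (α / 2) = 1 by field_simp, Real.rpow_one]
  -- T ^ (-(α/2)) in terms of v
  have hE : T ^ (-(α / 2)) = (2 / (α + 2)) * v ^ (-(α / 2)) := by
    rw [hTv, Real.div_rpow hv0.le hc0.le, Real.rpow_neg hc0.le, hca, div_inv_eq_mul]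
    ring
  -- lower bound on v ^ (-(α/2))
  have h1 : v ^ (-(α / 2)) = Real.exp (Real.log v * -(α / 2)) :=
    Real.rpow_def_of_pos hv0 _
  have h2 : Real.log v * -(α / 2) + 1 ≤ Real.exp (Real.log v * -(α / 2)) :=
    Real.add_one_le_exp _
  have h3 : Real.log v ≤ v - 1 := Real.log_le_sub_one_of_pos hv0
  have hw : 1 - (α / 2) * (v - 1) ≤ v ^ (-(α / 2)) := by
    rw [h1]
    nlinarith
  have h5 : (α + 2) * T ^ (-(α / 2)) = 2 * v ^ (-(α / 2)) := by
    rw [hE]; field_simp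
  have h7 : (α + 2) * (1 - T ^ (-(α / 2))) ≤ (α + 2) * (c * x) := by
    nlinarith [h5, hw, hαv]
  have hkey : 1 - T ^ (-(α / 2)) ≤ c * x :=
    le_of_mul_le_mul_left h7 hα2
  refine le_min hkey ?_
  have : 0 ≤ T ^ (-(α / 2)) := Real.rpow_nonneg hT0.le _
  linarith
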